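/- Failure of compositionality for a symmetric convex combination of rotated Petz maps (classical/diagonal computation): let θ = e^{2π}/(1+e^{2π}), p = tanh(π/2)/(2 sinh(π)), φ = e^{π}/(1+e^{π}), t = 1/2, α = diag(θ, 1-θ), β = diag(φ, 1-φ), E = (1-p)·id + p·Ad_{σ_x} and F = (1/2)·id + (1/2)·Ad_{σ_x} on M₂(ℂ). Define R = (1/2)R^{P,t} + (1/2)R^{P,-t} where R^{P,s}_{α,E} = Ad_{α^{1/2-is}} ∘ E* ∘ Ad_{β^{-1/2+is}}. Then R_{α,E}(β) = α, β = E(α), F(β) = (1/2)·1₂, but R_{α,F∘E} ≠ R_{α,E} ∘ R_{β,F}: applied to the matrix unit e₁₂ = [[0,1],[0,0]], the left side gives (-1/(2cosh π))·σ_x while the right side gives 0. -/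

import Mathlib

open Matrix ComplexOrder

noncomputable section

/-- The Pauli matrix σ_x. -/
def sigmaX : Matrix (Fin 2) (Fin 2) ℂ := !![0, 1; 1, 0]

/-- The matrix unit e₁₂. -/
def e12 : Matrix (Fin 2) (Fin 2) ℂ := !![0, 1; 0, 0]

/-- For `α = diag(a, 1-a)` with `0 < a < 1`, the complex power
`α^z = diag(a^z, (1-a)^z)`, where `a^z = exp(z ln a)`. -/
def dpow (a : ℝ) (z : ℂ) : Matrix (Fin 2) (Fin 2) ℂ :=
  Matrix.diagonal ![Complex.exp (z * Real.log a), Complex.exp (z * Real.log (1 - a))]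

/-- θ = e^{2π}/(1+e^{2π}). -/
def theta1 : ℝ := Real.exp (2 * Real.pi) / (1 + Real.exp (2 * Real.pi))

/-- p = tanh(π/2)/(2 sinh π). -/
def p1 : ℝ := Real.tanh (Real.pi / 2) / (2 * Real.sinh Real.pi)

/-- φ = e^{π}/(1+e^{π}). -/
def phi1 : ℝ := Real.exp Real.pi / (1 + Real.exp Real.pi)

/-- The bit-flip channel E = (1-p)·id + p·Ad_{σ_x}. -/
def Emap1 (X : Matrix (Fin 2) (Fin 2) ℂ) : Matrix (Fin 2) (Fin 2) ℂ :=
  ((1 : ℂ) - (p1 : ℝ)) • X + ((p1 : ℝ) : ℂ) • (sigmaX * X * sigmaX)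

/-- The bit-flip channel F = (1/2)·id + (1/2)·Ad_{σ_x}. -/
def Fmap1 (X : Matrix (Fin 2) (Fin 2) ℂ) : Matrix (Fin 2) (Fin 2) ℂ :=
  ((1 : ℂ) / 2) • X + ((1 : ℂ) / 2) • (sigmaX * X * sigmaX)

/-- The rotated Petz map R^{P,s}_{α,E} = Ad_{α^{1/2-is}} ∘ E* ∘ Ad_{β^{-1/2+is}}
with α = diag(θ, 1-θ), β = diag(φ, 1-φ); here E* = E since E is self-adjoint for
the Hilbert–Schmidt inner product. -/
def RE (s : ℝ) (Y : Matrix (Fin 2) (Fin 2) ℂ) : Matrix (Fin 2) (Fin 2) ℂ :=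
  dpow theta1 (1 / 2 - Complex.I * (s : ℂ)) *
      Emap1 (dpow phi1 (-(1 / 2) + Complex.I * (s : ℂ)) * Y *
        dpow phi1 (-(1 / 2) - Complex.I * (s : ℂ))) *
    dpow theta1 (1 / 2 + Complex.I * (s : ℂ))

/-- The rotated Petz map R^{P,s}_{β,F} with β = diag(φ, 1-φ) and F(β) = (1/2)·1; F* = F. -/
def RF (s : ℝ) (Z : Matrix (Fin 2) (Fin 2) ℂ) : Matrix (Fin 2) (Fin 2) ℂ :=
  dpow phi1 (1 / 2 - Complex.I * (s : ℂ)) *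
      Fmap1 (dpow (1 / 2) (-(1 / 2) + Complex.I * (s : ℂ)) * Z *
        dpow (1 / 2) (-(1 / 2) - Complex.I * (s : ℂ))) *
    dpow phi1 (1 / 2 + Complex.I * (s : ℂ))

/-- The rotated Petz map R^{P,s}_{α,F∘E}; note (F∘E)* = E*∘F* = E∘F = Emap1 ∘ Fmap1. -/
def RFE (s : ℝ) (Z : Matrix (Fin 2) (Fin 2) ℂ) : Matrix (Fin 2) (Fin 2) ℂ :=
  dpow theta1 (1 / 2 - Complex.I * (s : ℂ)) *
      Emap1 (Fmap1 (dpow (1 / 2) (-(1 / 2) + Complex.I * (s : ℂ)) * Z *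
        dpow (1 / 2) (-(1 / 2) - Complex.I * (s : ℂ)))) *
    dpow theta1 (1 / 2 + Complex.I * (s : ℂ))

/-- The symmetric average R = (1/2)R^{P,1/2} + (1/2)R^{P,-1/2} for the pair (α, E). -/
def RavgE (Y : Matrix (Fin 2) (Fin 2) ℂ) : Matrix (Fin 2) (Fin 2) ℂ :=
  ((1 : ℂ) / 2) • RE (1 / 2) Y + ((1 : ℂ) / 2) • RE (-(1 / 2)) Y

/-- The symmetric average for the pair (β, F). -/
def RavgF (Z : Matrix (Fin 2) (Fin 2) ℂ) : Matrix (Fin 2) (Fin 2) ℂ :=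
  ((1 : ℂ) / 2) • RF (1 / 2) Z + ((1 : ℂ) / 2) • RF (-(1 / 2)) Z

/-- The symmetric average for the pair (α, F∘E). -/
def RavgFE (Z : Matrix (Fin 2) (Fin 2) ℂ) : Matrix (Fin 2) (Fin 2) ℂ :=
  ((1 : ℂ) / 2) • RFE (1 / 2) Z + ((1 : ℂ) / 2) • RFE (-(1 / 2)) Z

lemma exp2pi : Real.exp (2*Real.pi) = Real.exp (Real.pi/2)^4 := by
  rw [← Real.exp_nat_mul]; ring_nf
lemma exppi : Real.exp Real.pi = Real.exp (Real.pi/2)^2 := by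
  rw [← Real.exp_nat_mul]; ring_nf
lemma expnegpi : Real.exp (-Real.pi) = (Real.exp (Real.pi/2)^2)⁻¹ := by
  rw [Real.exp_neg, exppi]
lemma expneghalfpi : Real.exp (-(Real.pi/2)) = (Real.exp (Real.pi/2))⁻¹ := Real.exp_neg _

lemma p1_eq : p1 = Real.exp Real.pi / (1 + Real.exp Real.pi)^2 := by
  have hx : (0:ℝ) < Real.exp (Real.pi/2) := Real.exp_pos _
  set x := Real.exp (Real.pi/2) with hxdef
  have h1 : (1:ℝ) < x := by
    rw [hxdef]; have := Real.pi_pos; nlinarith [Real.add_one_le_exp (Real.pi/2)]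
  have hxne : x ≠ 0 := ne_of_gt hx
  have h2 : x^2 + 1 ≠ 0 := by positivity
  have h2' : (1:ℝ) + x^2 ≠ 0 := by positivity
  have h3 : x^2 - 1 ≠ 0 := by nlinarith
  have ht : Real.tanh (Real.pi/2) = (x^2-1)/(x^2+1) := by
    rw [Real.tanh_eq_sinh_div_cosh, Real.sinh_eq, Real.cosh_eq, expneghalfpi, ← hxdef]
    have h4 : x + x⁻¹ ≠ 0 := by positivity
    field_simp
  have hs : 2*Real.sinh Real.pi = (x^2 - 1)*(x^2+1)/x^2 := by
    rw [Real.sinh_eq, exppi, expnegpi, ← hxdef]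
    field_simp
    ring
  rw [p1, ht, hs, exppi, ← hxdef]
  field_simp
  ring

lemma key1 : (1 - p1)*theta1 + p1*(1-theta1) = phi1 := by
  have hx : (0:ℝ) < Real.exp (Real.pi/2) := Real.exp_pos _
  rw [p1_eq, theta1, phi1, exp2pi, exppi]
  set x := Real.exp (Real.pi/2) with hxdef
  have h4 : (1:ℝ) + x^4 ≠ 0 := by positivity
  have h2 : (1:ℝ) + x^2 ≠ 0 := by positivity
  field_simp
  ring

lemma theta1_pos : 0 < theta1 := by
  have := Real.exp_pos (2*Real.pi); have : (0:ℝ) < 1 + Real.exp (2*Real.pi) := by positivity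
  exact div_pos (Real.exp_pos _) this
lemma one_sub_theta1 : 1 - theta1 = 1/(1+Real.exp (2*Real.pi)) := by
  have : (0:ℝ) < 1 + Real.exp (2*Real.pi) := by positivity
  rw [theta1]; field_simp; ring
lemma phi1_pos : 0 < phi1 := by
  have : (0:ℝ) < 1 + Real.exp Real.pi := by positivity
  exact div_pos (Real.exp_pos _) this
lemma one_sub_phi1 : 1 - phi1 = 1/(1+Real.exp Real.pi) := by
  have : (0:ℝ) < 1 + Real.exp Real.pi := by positivity
  rw [phi1]; field_simp; ring

lemma log_theta1 : Real.log theta1 = 2*Real.pi - Real.log (1+Real.exp (2*Real.pi)) := by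
  rw [theta1, Real.log_div (Real.exp_ne_zero _) (by positivity), Real.log_exp]
lemma log_one_sub_theta1 : Real.log (1-theta1) = -Real.log (1+Real.exp (2*Real.pi)) := by
  rw [one_sub_theta1, one_div, Real.log_inv]
lemma log_phi1 : Real.log phi1 = Real.pi - Real.log (1+Real.exp Real.pi) := by
  rw [phi1, Real.log_div (Real.exp_ne_zero _) (by positivity), Real.log_exp]
lemma log_one_sub_phi1 : Real.log (1-phi1) = -Real.log (1+Real.exp Real.pi) := by
  rw [one_sub_phi1, one_div, Real.log_inv]

lemma rval : Real.exp (Real.pi - Real.log (1+Real.exp (2*Real.pi))) = 1/(2*Real.cosh Real.pi) := by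
  rw [Real.exp_sub, Real.exp_log (by positivity), Real.cosh_eq, exppi, expnegpi, exp2pi]
  have hx : (0:ℝ) < Real.exp (Real.pi/2) := Real.exp_pos _
  set x := Real.exp (Real.pi/2)
  have h4 : (1:ℝ) + x^4 ≠ 0 := by positivity
  have h5 : x^2 + (x^2)⁻¹ ≠ 0 := by positivity
  field_simp
  ring


lemma dpow_mul_dpow (a : ℝ) (z w : ℂ) : dpow a z * dpow a w = dpow a (z+w) := by
  rw [dpow, dpow, dpow, diagonal_mul_diagonal]
  ext i j
  fin_cases i <;> fin_cases j <;>
    simp [Matrix.diagonal_apply, ← Complex.exp_add] <;> ring_nf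

lemma dpow_zero (a : ℝ) : dpow a 0 = 1 := by
  rw [dpow]
  ext i j
  fin_cases i <;> fin_cases j <;> simp [Matrix.one_apply]

lemma dpow_one (a : ℝ) (h0 : 0 < a) (h1 : a < 1) :
    dpow a 1 = Matrix.diagonal ![(a:ℂ), 1-(a:ℝ)] := by
  rw [dpow]
  congr 1
  funext i
  fin_cases i <;>
    simp [← Complex.ofReal_exp, Real.exp_log h0, Real.exp_log (by linarith : (0:ℝ) < 1-a)] <;>
    push_cast <;> ring

lemma sigmaX_sq : sigmaX * sigmaX = 1 := by
  rw [sigmaX]; ext i j; fin_cases i <;> fin_cases j <;> simp [Matrix.mul_apply, Fin.sum_univ_two, Matrix.one_apply]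

lemma sigma_diag (v : Fin 2 → ℂ) :
    sigmaX * Matrix.diagonal v * sigmaX = Matrix.diagonal ![v 1, v 0] := by
  rw [sigmaX]; ext i j; fin_cases i <;> fin_cases j <;>
    simp [Matrix.mul_apply, Matrix.vecMul, dotProduct, Fin.sum_univ_two, Matrix.diagonal_apply]


lemma theta1_lt_one : theta1 < 1 := by
  have h := one_sub_theta1
  have : (0:ℝ) < 1/(1+Real.exp (2*Real.pi)) := by positivity
  linarith
lemma phi1_lt_one : phi1 < 1 := by
  have h := one_sub_phi1
  have : (0:ℝ) < 1/(1+Real.exp Real.pi) := by positivity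
  linarith

lemma key1C : ((1:ℂ) - (p1:ℝ))*(theta1:ℝ) + (p1:ℝ)*(1-(theta1:ℝ)) = (phi1:ℝ) := by
  exact_mod_cast key1
lemma key2C : ((1:ℂ) - (p1:ℝ))*(1-(theta1:ℝ)) + (p1:ℝ)*(theta1:ℝ) = 1-(phi1:ℝ) := by
  have h := key1C; push_cast at h ⊢; linear_combination -h

lemma conj1 : Emap1 (Matrix.diagonal ![(theta1 : ℂ), 1 - (theta1 : ℝ)])
    = Matrix.diagonal ![(phi1 : ℂ), 1 - (phi1 : ℝ)] := by
  rw [Emap1, sigma_diag]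
  ext i j
  fin_cases i <;> fin_cases j <;> simp [Matrix.diagonal_apply]
  · exact key1C
  · exact key2C

lemma conj2 : Fmap1 (Matrix.diagonal ![(phi1 : ℂ), 1 - (phi1 : ℝ)]) = ((1:ℂ)/2) • 1 := by
  rw [Fmap1, sigma_diag]
  ext i j
  fin_cases i <;> fin_cases j <;>
    simp [Matrix.diagonal_apply, Matrix.one_apply] <;> push_cast <;> ring

lemma Emap1_one : Emap1 1 = 1 := by
  rw [Emap1, mul_one, sigmaX_sq, ← add_smul]
  norm_num

lemma RE_beta (s : ℝ) : RE s (Matrix.diagonal ![(phi1 : ℂ), 1 - (phi1 : ℝ)])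
    = Matrix.diagonal ![(theta1 : ℂ), 1 - (theta1 : ℝ)] := by
  rw [RE, ← dpow_one phi1 phi1_pos phi1_lt_one, dpow_mul_dpow, dpow_mul_dpow]
  have h1 : (-(1/2) + Complex.I * s + 1 + (-(1/2) - Complex.I * s)) = 0 := by ring
  rw [h1, dpow_zero, Emap1_one, mul_one, dpow_mul_dpow]
  have h2 : ((1:ℂ)/2 - Complex.I * s + (1/2 + Complex.I * s)) = 1 := by ring
  rw [h2, dpow_one theta1 theta1_pos theta1_lt_one]

lemma conj3 : RavgE (Matrix.diagonal ![(phi1 : ℂ), 1 - (phi1 : ℝ)])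
    = Matrix.diagonal ![(theta1 : ℂ), 1 - (theta1 : ℝ)] := by
  rw [RavgE, RE_beta, RE_beta, ← add_smul]
  norm_num

lemma log_half : Real.log ((1:ℝ)/2) = -Real.log 2 := by
  rw [one_div, Real.log_inv]

lemma dpow_half (z : ℂ) : dpow (1/2) z = Complex.exp (z * (Real.log ((1:ℝ)/2))) • (1 : Matrix (Fin 2) (Fin 2) ℂ) := by
  rw [dpow]
  have h : (1:ℝ) - 1/2 = 1/2 := by norm_num
  rw [h]
  ext i j
  fin_cases i <;> fin_cases j <;> simp [Matrix.diagonal_apply, Matrix.one_apply]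

lemma inner_half (s : ℝ) (Z : Matrix (Fin 2) (Fin 2) ℂ) :
    dpow (1/2) (-(1/2) + Complex.I * s) * Z * dpow (1/2) (-(1/2) - Complex.I * s)
      = (2:ℂ) • Z := by
  rw [dpow_half, dpow_half, smul_mul_assoc, smul_mul_assoc, one_mul, mul_smul_comm, mul_one,
    smul_smul, ← Complex.exp_add]
  congr 1
  have h : ((-(1/2) + Complex.I * s) * (Real.log ((1:ℝ)/2)) + (-(1/2) - Complex.I * s) * (Real.log ((1:ℝ)/2)))
      = ((Real.log 2 : ℝ) : ℂ) := by
    rw [log_half]; push_cast; ring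
  rw [h, ← Complex.ofReal_exp, Real.exp_log (by norm_num : (0:ℝ) < 2)]
  norm_num

lemma F2e12 : Fmap1 ((2:ℂ) • e12) = sigmaX := by
  rw [Fmap1, sigmaX, e12]
  ext i j
  fin_cases i <;> fin_cases j <;>
    simp [Matrix.mul_apply, Fin.sum_univ_two] <;> norm_num

lemma Emap1_sigmaX : Emap1 sigmaX = sigmaX := by
  rw [Emap1, sigmaX_sq, one_mul, ← add_smul]
  norm_num

lemma outer (a : ℝ) (z w : ℂ) : dpow a z * sigmaX * dpow a w =
    !![0, Complex.exp (z * Real.log a + w * Real.log (1-a));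
       Complex.exp (z * Real.log (1-a) + w * Real.log a), 0] := by
  rw [dpow, dpow, sigmaX]
  ext i j
  fin_cases i <;> fin_cases j <;>
    simp [Matrix.mul_apply, Fin.sum_univ_two, Matrix.diagonal_apply, ← Complex.exp_add]

lemma thetaEntry (s : ℝ) (hs : s = 1/2 ∨ s = -(1/2)) :
    Complex.exp ((1/2 - Complex.I * (s:ℂ)) * (Real.log theta1 : ℝ) + (1/2 + Complex.I * (s:ℂ)) * (Real.log (1-theta1) : ℝ))
      = ((-(1/(2*Real.cosh Real.pi)) : ℝ) : ℂ) := by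
  have h : ((1/2 - Complex.I * (s:ℂ)) * ((Real.log theta1 : ℝ) : ℂ) + (1/2 + Complex.I * (s:ℂ)) * ((Real.log (1-theta1) : ℝ) : ℂ))
      = ((Real.pi - Real.log (1+Real.exp (2*Real.pi)) : ℝ) : ℂ) + (-(2*(Real.pi:ℂ)*Complex.I*(s:ℂ))) := by
    rw [log_theta1, log_one_sub_theta1]; push_cast; ring
  rw [h, Complex.exp_add, ← Complex.ofReal_exp, rval]
  rcases hs with h'|h' <;> subst h'
  · have h2 : -(2*(Real.pi:ℂ)*Complex.I*(((1:ℝ)/2:ℝ):ℂ)) = -((Real.pi:ℂ) * Complex.I) := by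
      push_cast; ring
    rw [h2, Complex.exp_neg, Complex.exp_pi_mul_I]
    push_cast; ring_nf
  · have h2 : -(2*(Real.pi:ℂ)*Complex.I*((-(1/2):ℝ):ℂ)) = (Real.pi:ℂ) * Complex.I := by
      push_cast; ring
    rw [h2, Complex.exp_pi_mul_I]
    push_cast; ring_nf

lemma thetaEntry' (s : ℝ) (hs : s = 1/2 ∨ s = -(1/2)) :
    Complex.exp ((1/2 - Complex.I * (s:ℂ)) * (Real.log (1-theta1) : ℝ) + (1/2 + Complex.I * (s:ℂ)) * (Real.log theta1 : ℝ))
      = ((-(1/(2*Real.cosh Real.pi)) : ℝ) : ℂ) := by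
  have h : ((1/2 - Complex.I * (s:ℂ)) * ((Real.log (1-theta1) : ℝ) : ℂ) + (1/2 + Complex.I * (s:ℂ)) * ((Real.log theta1 : ℝ) : ℂ))
      = ((1/2 - Complex.I * ((-s:ℝ):ℂ)) * ((Real.log theta1 : ℝ) : ℂ) + (1/2 + Complex.I * ((-s:ℝ):ℂ)) * ((Real.log (1-theta1) : ℝ) : ℂ)) := by
    push_cast; ring
  rw [h, thetaEntry (-s) (by rcases hs with h'|h' <;> subst h' <;> norm_num)]

lemma RFE_e12 (s : ℝ) : RFE s e12 =
    !![0, Complex.exp ((1/2 - Complex.I * (s:ℂ)) * Real.log theta1 + (1/2 + Complex.I * (s:ℂ)) * Real.log (1-theta1));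
       Complex.exp ((1/2 - Complex.I * (s:ℂ)) * Real.log (1-theta1) + (1/2 + Complex.I * (s:ℂ)) * Real.log theta1), 0] := by
  rw [RFE, inner_half, F2e12, Emap1_sigmaX, outer]

lemma RF_e12 (s : ℝ) : RF s e12 =
    !![0, Complex.exp ((1/2 - Complex.I * (s:ℂ)) * Real.log phi1 + (1/2 + Complex.I * (s:ℂ)) * Real.log (1-phi1));
       Complex.exp ((1/2 - Complex.I * (s:ℂ)) * Real.log (1-phi1) + (1/2 + Complex.I * (s:ℂ)) * Real.log phi1), 0] := by
  rw [RF, inner_half, F2e12, outer]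

lemma conj4 : RavgFE e12 = ((-(1 / (2 * Real.cosh Real.pi)) : ℝ) : ℂ) • sigmaX := by
  rw [RavgFE, RFE_e12, RFE_e12,
    thetaEntry (1/2) (Or.inl rfl), thetaEntry' (1/2) (Or.inl rfl),
    thetaEntry (-(1/2)) (Or.inr rfl), thetaEntry' (-(1/2)) (Or.inr rfl), sigmaX]
  ext i j
  fin_cases i <;> fin_cases j <;> simp <;> ring

lemma exp_half_pi_I : Complex.exp (((Real.pi/2 : ℝ) : ℂ) * Complex.I) = Complex.I := by
  rw [Complex.exp_mul_I, ← Complex.ofReal_cos, ← Complex.ofReal_sin,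
    Real.cos_pi_div_two, Real.sin_pi_div_two]
  simp

lemma phiSum :
    Complex.exp ((1/2 - Complex.I * (((1:ℝ)/2:ℝ):ℂ)) * (Real.log phi1 : ℝ) + (1/2 + Complex.I * (((1:ℝ)/2:ℝ):ℂ)) * (Real.log (1-phi1) : ℝ))
    + Complex.exp ((1/2 - Complex.I * ((-(1/2):ℝ):ℂ)) * (Real.log phi1 : ℝ) + (1/2 + Complex.I * ((-(1/2):ℝ):ℂ)) * (Real.log (1-phi1) : ℝ)) = 0 := by
  have h1 : ((1/2 - Complex.I * (((1:ℝ)/2:ℝ):ℂ)) * ((Real.log phi1 : ℝ) : ℂ) + (1/2 + Complex.I * (((1:ℝ)/2:ℝ):ℂ)) * ((Real.log (1-phi1) : ℝ) : ℂ))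
      = ((Real.pi/2 - Real.log (1+Real.exp Real.pi) : ℝ) : ℂ) + (-(((Real.pi/2 : ℝ) : ℂ) * Complex.I)) := by
    rw [log_phi1, log_one_sub_phi1]; push_cast; ring
  have h2 : ((1/2 - Complex.I * ((-(1/2):ℝ):ℂ)) * ((Real.log phi1 : ℝ) : ℂ) + (1/2 + Complex.I * ((-(1/2):ℝ):ℂ)) * ((Real.log (1-phi1) : ℝ) : ℂ))
      = ((Real.pi/2 - Real.log (1+Real.exp Real.pi) : ℝ) : ℂ) + (((Real.pi/2 : ℝ) : ℂ) * Complex.I) := by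
    rw [log_phi1, log_one_sub_phi1]; push_cast; ring
  rw [h1, h2, Complex.exp_add, Complex.exp_add, Complex.exp_neg, exp_half_pi_I]
  rw [Complex.inv_I]
  ring

lemma phiSum' :
    Complex.exp ((1/2 - Complex.I * (((1:ℝ)/2:ℝ):ℂ)) * (Real.log (1-phi1) : ℝ) + (1/2 + Complex.I * (((1:ℝ)/2:ℝ):ℂ)) * (Real.log phi1 : ℝ))
    + Complex.exp ((1/2 - Complex.I * ((-(1/2):ℝ):ℂ)) * (Real.log (1-phi1) : ℝ) + (1/2 + Complex.I * ((-(1/2):ℝ):ℂ)) * (Real.log phi1 : ℝ)) = 0 := by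
  have h1 : ((1/2 - Complex.I * (((1:ℝ)/2:ℝ):ℂ)) * ((Real.log (1-phi1) : ℝ) : ℂ) + (1/2 + Complex.I * (((1:ℝ)/2:ℝ):ℂ)) * ((Real.log phi1 : ℝ) : ℂ))
      = ((1/2 - Complex.I * ((-(1/2):ℝ):ℂ)) * ((Real.log phi1 : ℝ) : ℂ) + (1/2 + Complex.I * ((-(1/2):ℝ):ℂ)) * ((Real.log (1-phi1) : ℝ) : ℂ)) := by
    push_cast; ring
  have h2 : ((1/2 - Complex.I * ((-(1/2):ℝ):ℂ)) * ((Real.log (1-phi1) : ℝ) : ℂ) + (1/2 + Complex.I * ((-(1/2):ℝ):ℂ)) * ((Real.log phi1 : ℝ) : ℂ))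
      = ((1/2 - Complex.I * (((1:ℝ)/2:ℝ):ℂ)) * ((Real.log phi1 : ℝ) : ℂ) + (1/2 + Complex.I * (((1:ℝ)/2:ℝ):ℂ)) * ((Real.log (1-phi1) : ℝ) : ℂ)) := by
    push_cast; ring
  rw [h1, h2, add_comm]
  exact phiSum

lemma RavgF_e12 : RavgF e12 = 0 := by
  rw [RavgF, RF_e12, RF_e12]
  ext i j
  fin_cases i <;> fin_cases j <;>
    simp only [Matrix.add_apply, Matrix.smul_apply, Matrix.cons_val', Matrix.cons_val_zero,
      Matrix.cons_val_one, Matrix.head_cons, Matrix.empty_val', Matrix.cons_val_fin_one,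
      Matrix.head_fin_const, Matrix.zero_apply, smul_eq_mul, Fin.mk_zero, Fin.mk_one,
      Matrix.of_apply, Matrix.cons_val_zero, Matrix.cons_val_one, Matrix.head_cons]
  · norm_num
  · linear_combination (1/2 : ℂ) * phiSum
  · linear_combination (1/2 : ℂ) * phiSum'
  · norm_num

lemma RE_zero (s : ℝ) : RE s 0 = 0 := by
  simp [RE, Emap1]

lemma conj5 : RavgE (RavgF e12) = 0 := by
  rw [RavgF_e12, RavgE, RE_zero, RE_zero]
  simp

/-- with the stated numerical values (t = 1/2), the symmetric convex
combination R = (1/2)R^{P,t} + (1/2)R^{P,-t} of rotated Petz maps satisfies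
β = E(α), F(β) = (1/2)·1, R_{α,E}(β) = α, but fails compositionality:
R_{α,F∘E}(e₁₂) = (-1/(2cosh π))·σ_x whereas (R_{α,E} ∘ R_{β,F})(e₁₂) = 0. -/
theorem averaged_rotated_petz_not_compositional :
    Emap1 (Matrix.diagonal ![(theta1 : ℂ), 1 - (theta1 : ℝ)])
        = Matrix.diagonal ![(phi1 : ℂ), 1 - (phi1 : ℝ)] ∧
    Fmap1 (Matrix.diagonal ![(phi1 : ℂ), 1 - (phi1 : ℝ)]) = ((1 : ℂ) / 2) • 1 ∧
    RavgE (Matrix.diagonal ![(phi1 : ℂ), 1 - (phi1 : ℝ)])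
        = Matrix.diagonal ![(theta1 : ℂ), 1 - (theta1 : ℝ)] ∧
    RavgFE e12 = ((-(1 / (2 * Real.cosh Real.pi)) : ℝ) : ℂ) • sigmaX ∧
    RavgE (RavgF e12) = 0 ∧
    ¬ (∀ Z : Matrix (Fin 2) (Fin 2) ℂ, RavgFE Z = RavgE (RavgF Z)) := by
  refine ⟨conj1, conj2, conj3, conj4, conj5, ?_⟩
  intro h
  have he := h e12
  rw [conj4, conj5] at he
  have h2 := congrFun (congrFun he 0) 1
  simp [sigmaX] at h2
  rw [← Complex.ofReal_cosh] at h2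
  exact absurd (Complex.ofReal_eq_zero.mp h2) (ne_of_gt (Real.cosh_pos Real.pi))

end
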